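/- For every integer L ≥ 0 and all natural numbers n, l with 1 ≤ l ≤ n, the rational number S_L(n,l) is a positive integer. -/

import Mathlib

open PowerSeries Finset

/-- The series `₀F_L(1,…,1;z) − 1 = ∑_{k≥1} z^k/(k!)^{L+1}` over `ℚ`. -/
noncomputable def hypFsub1 (L : ℕ) : PowerSeries ℚ :=
  PowerSeries.mk fun k => if k = 0 then 0 else 1 / (k.factorial : ℚ) ^ (L + 1)

/-- The exponential `exp f = ∑_{l≥0} f^l / l!` of a power series `f` with zero
constant term (for such `f`, `coeff n (f^l) = 0` for `l > n`, so the finite sum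
below is the full exponential series). -/
noncomputable def expPS (f : PowerSeries ℚ) : PowerSeries ℚ :=
  PowerSeries.mk fun n =>
    ∑ l ∈ Finset.range (n + 1), PowerSeries.coeff n (f ^ l) / (l.factorial : ℚ)

/-- `b_L(n) = (n!)^{L+1} · [z^n] exp(₀F_L(z) − 1)`. -/
noncomputable def bL (L n : ℕ) : ℚ :=
  (n.factorial : ℚ) ^ (L + 1) * PowerSeries.coeff n (expPS (hypFsub1 L))

/-- `S_L(n,l) = ((n!)^{L+1}/l!) · [z^n] (₀F_L(z) − 1)^l`, the generalized
Stirling numbers of the second kind of type `L`. -/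
noncomputable def SL (L n l : ℕ) : ℚ :=
  (n.factorial : ℚ) ^ (L + 1) / (l.factorial : ℚ) *
    PowerSeries.coeff n (hypFsub1 L ^ l)

/-- The series `∑_{k≥p+1} z^k/(k!)^{L+1}` over `ℚ`. -/
noncomputable def hypFtail (L p : ℕ) : PowerSeries ℚ :=
  PowerSeries.mk fun k => if k ≤ p then 0 else 1 / (k.factorial : ℚ) ^ (L + 1)

/-- `b_L(p,n) = (n!)^{L+1} · [z^n] exp(∑_{k≥p+1} z^k/(k!)^{L+1})`. -/
noncomputable def bLp (L p n : ℕ) : ℚ :=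
  (n.factorial : ℚ) ^ (L + 1) * PowerSeries.coeff n (expPS (hypFtail L p))

/-!
Comparing coefficients in `(Fᵐ⁺¹)' = (m + 1) Fᵐ F'` for `F = ∑_{k≥1} zᵏ/(k!)^{L+1}` gives the
recurrence `S_L(n+1, m+1) = ∑_{k+j=n} C(n,k) C(n+1,k)^L S_L(k, m)`: the factor `m + 1` from the
power rule cancels against `(m+1)!`, and `(j+1)/(n+1) · C(n+1,k) = C(n,k)`. The weights are natural
numbers, so integrality follows by induction on `l`, and positivity from the term `k = n`.
-/

open scoped Nat

lemma coeff_hypFsub1 (L k : ℕ) :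
    coeff k (hypFsub1 L) = if k = 0 then 0 else 1 / (k ! : ℚ) ^ (L + 1) :=
  coeff_mk _ _

lemma coeff_derivative_hypFsub1 (L j : ℕ) :
    coeff j (d⁄dX ℚ (hypFsub1 L)) = (j + 1) / ((j + 1) ! : ℚ) ^ (L + 1) := by
  rw [coeff_derivative, coeff_hypFsub1, if_neg j.succ_ne_zero]
  ring

lemma coeff_hypFsub1_pow_of_lt (L : ℕ) {n l : ℕ} (h : n < l) :
    coeff n (hypFsub1 L ^ l) = 0 := by
  have hX : (X : ℚ⟦X⟧) ∣ hypFsub1 L := X_dvd_iff.mpr (by simp [hypFsub1])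
  exact X_pow_dvd_iff.mp (pow_dvd_pow_of_dvd hX l) n h

lemma coeff_succ_pow_succ_mul {R : Type*} [CommSemiring R] (f : R⟦X⟧) (n m : ℕ) :
    coeff (n + 1) (f ^ (m + 1)) * (n + 1) =
      (m + 1) * ∑ p ∈ antidiagonal n, coeff p.1 (f ^ m) * coeff p.2 (d⁄dX R f) := by
  rw [← coeff_derivative, derivative_pow, Nat.add_sub_cancel, mul_assoc, ← coeff_mul,
    ← map_natCast (C (R := R)), coeff_C_mul, Nat.cast_succ]

lemma choose_mul_choose_pow_mul_factorial (L k j : ℕ) :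
    (k + j).choose k * (k + j + 1).choose k ^ L * (k + j + 1) * (k ! * (j + 1)!) ^ (L + 1) =
      (j + 1) * (k + j + 1)! ^ (L + 1) := by
  have hsucc : (k + j).choose k * (k + j + 1) = (k + j + 1).choose k * (j + 1) := by
    rw [Nat.choose_mul_succ_eq]; congr 2; omega
  have hfact : (k + j + 1).choose k * k ! * (j + 1)! = (k + j + 1)! := by
    simpa [add_assoc] using Nat.choose_mul_factorial_mul_factorial (Nat.le_add_right k (j + 1))
  rw [← hfact, mul_right_comm _ _ (k + j + 1), hsucc]
  ring

lemma SL_zero_right (L n : ℕ) : SL L n 0 = if n = 0 then 1 else 0 := by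
  rcases n with _ | n <;> simp [SL]

lemma SL_zero_succ (L m : ℕ) : SL L 0 (m + 1) = 0 := by
  simp [SL, coeff_hypFsub1_pow_of_lt L m.succ_pos]

lemma SL_one (L : ℕ) {n : ℕ} (hn : n ≠ 0) : SL L n 1 = 1 := by
  simp [SL, coeff_hypFsub1, hn, Nat.factorial_ne_zero]

lemma SL_succ_succ (L n m : ℕ) :
    SL L (n + 1) (m + 1) = ∑ p ∈ antidiagonal n,
      ((n.choose p.1 * (n + 1).choose p.1 ^ L : ℕ) : ℚ) * SL L p.1 m := by
  have hcoeff : coeff (n + 1) (hypFsub1 L ^ (m + 1)) = (m + 1) / (n + 1) *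
      ∑ p ∈ antidiagonal n, coeff p.1 (hypFsub1 L ^ m) * coeff p.2 (d⁄dX ℚ (hypFsub1 L)) := by
    rw [div_mul_eq_mul_div, ← coeff_succ_pow_succ_mul, mul_div_cancel_right₀ _ (by positivity)]
  rw [SL, hcoeff, mul_sum, mul_sum]
  refine sum_congr rfl fun ⟨k, j⟩ hkj => ?_
  obtain rfl : k + j = n := mem_antidiagonal.mp hkj
  have key := congrArg (Nat.cast (R := ℚ)) (choose_mul_choose_pow_mul_factorial L k j)
  push_cast at key ⊢
  rw [SL, coeff_derivative_hypFsub1, Nat.factorial_succ m]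
  push_cast
  field_simp
  linear_combination (-(coeff k (hypFsub1 L ^ m))) * key

lemma exists_SL_eq_natCast (L n l : ℕ) : ∃ c : ℕ, SL L n l = c := by
  induction l generalizing n with
  | zero => exact ⟨if n = 0 then 1 else 0, by simp [SL_zero_right]⟩
  | succ m ih =>
    rcases n with _ | n
    · exact ⟨0, by simp [SL_zero_succ]⟩
    choose c hc using ih
    refine ⟨∑ p ∈ antidiagonal n, n.choose p.1 * (n + 1).choose p.1 ^ L * c p.1, ?_⟩
    simp [SL_succ_succ, hc]

lemma SL_nonneg (L n l : ℕ) : 0 ≤ SL L n l := by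
  obtain ⟨c, hc⟩ := exists_SL_eq_natCast L n l
  exact hc ▸ c.cast_nonneg

lemma SL_pos (L : ℕ) {n l : ℕ} (hl : 1 ≤ l) (hln : l ≤ n) : 0 < SL L n l := by
  induction l, hl using Nat.le_induction generalizing n with
  | base => rw [SL_one L (by omega)]; exact one_pos
  | succ m _ ih =>
    obtain ⟨n, rfl⟩ : ∃ n', n = n' + 1 := ⟨n - 1, by omega⟩
    rw [SL_succ_succ]
    have hmem : (n, 0) ∈ antidiagonal n := mem_antidiagonal.mpr (add_zero n)
    refine lt_of_lt_of_le ?_ (single_le_sum (fun p _ => ?_) hmem)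
    · have hweight : 0 < n.choose n * (n + 1).choose n ^ L :=
        Nat.mul_pos (Nat.choose_pos le_rfl) (pow_pos (Nat.choose_pos n.le_succ) L)
      exact mul_pos (Nat.cast_pos.mpr hweight) (ih (by omega))
    · exact mul_nonneg (Nat.cast_nonneg _) (SL_nonneg L _ _)

/-- for `1 ≤ l ≤ n`, `S_L(n,l)` is a positive integer. -/
theorem stmt_7 (L n l : ℕ) (hl : 1 ≤ l) (hln : l ≤ n) :
    ∃ m : ℕ, 0 < m ∧ SL L n l = (m : ℚ) := by
  obtain ⟨m, hm⟩ := exists_SL_eq_natCast L n l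
  exact ⟨m, by exact_mod_cast hm ▸ SL_pos L hl hln, hm⟩
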